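/- arXiv:2312.10830 — 4 statements merged into one kernel-verified Lean document; each statement's English description precedes it below -/
import Mathlib

section
/- Let C be a hereditary class of graphs that is closed under edge addition and closed under the addition of universal vertices. Then M_{G_C} is precisely the class of graphs of the form 2K1 ∨ H with H ∈ M_C; that is, a graph F does not belong to G_C but all proper induced minors of F belong to G_C if and only if F is isomorphic to 2K1 ∨ H for some H ∈ M_C. -/
/-!
If `S` is a minimal `(a,b)`-separator of `G`, contracting the components of `a` and `b` in
`G - S` exhibits `2K₁ ∨ G[S]` as an induced minor of `G`, and conversely `V(H)` is a minimal
separator of `2K₁ ∨ H`. So a minimal graph `F ∉ 𝒢_C` is `2K₁ ∨ F[S]` for a minimal separator `S`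
with `F[S] ∉ C`, and the minimality of `F` passes to `F[S]`.

Conversely, a minimal separator `T` of a proper induced minor of `2K₁ ∨ H` gives an induced minor
`2K₁ ∨ X` of `2K₁ ∨ H` with `X` the graph induced on `T`, and `|X| < |H|`. In a model of it, the
vertices of `X` whose branch sets avoid the two extra vertices of `2K₁ ∨ H` induce an induced minor
of `H`, hence a graph in `C`; each of the at most two other vertices is adjacent to all of them.
If these are pairwise adjacent, `X` arises by adding universal vertices; otherwise they are two
nonadjacent vertices, `X ≅ 2K₁ ∨ X'`, and that graph is itself a proper induced minor of `H`.
-/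

open SimpleGraph

namespace PaperSep

variable {V : Type} {W : Type}

/-- There is a walk from `a` to `b` in `G` all of whose vertices avoid the set `S`. -/
def ConnAvoid (G : SimpleGraph V) (S : Set V) (a b : V) : Prop :=
  ∃ p : G.Walk a b, ∀ v ∈ p.support, v ∉ S

/-- `S` is an `(a,b)`-separator of `G`. -/
def IsSep (G : SimpleGraph V) (a b : V) (S : Set V) : Prop :=
  a ∉ S ∧ b ∉ S ∧ ¬ ConnAvoid G S a b

/-- `S` is a minimal `(a,b)`-separator of `G`. -/
def IsMinSep (G : SimpleGraph V) (a b : V) (S : Set V) : Prop :=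
  IsSep G a b S ∧ ∀ T ⊂ S, ¬ IsSep G a b T

/-- `S` is a minimal separator of `G`. -/
def IsMinimalSeparator (G : SimpleGraph V) (S : Set V) : Prop :=
  ∃ a b : V, a ≠ b ∧ ¬ G.Adj a b ∧ IsMinSep G a b S

/-- `K` is a cutset of `G`, i.e. `G − K` is disconnected. -/
def IsCutset (G : SimpleGraph V) (K : Set V) : Prop :=
  ∃ a b : V, a ∉ K ∧ b ∉ K ∧ ¬ ConnAvoid G K a b

/-- `K` is a minimal cutset of `G`. -/
def IsMinimalCutset (G : SimpleGraph V) (K : Set V) : Prop :=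
  IsCutset G K ∧ ∀ T ⊂ K, ¬ IsCutset G T

/-- A class of finite graphs. -/
def GraphClass : Type 1 :=
  ∀ (α : Type) [Finite α], SimpleGraph α → Prop

/-- A class is hereditary if it is closed under isomorphism and induced subgraphs. -/
def Hereditary (C : GraphClass) : Prop :=
  ∀ (α : Type) [Finite α] (G : SimpleGraph α) (β : Type) [Finite β] (H : SimpleGraph β)
    (s : Set α), Nonempty (H ≃g G.induce s) → C α G → C β H

/-- `G ∈ 𝒢_C` : every minimal separator of `G` induces a graph in `C`. -/
def MemGC (C : GraphClass) {α : Type} [Finite α] (G : SimpleGraph α) : Prop :=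
  ∀ S : Set α, IsMinimalSeparator G S → C ↥S (G.induce S)

/-- The class `𝒢_C`. -/
def GCclass (C : GraphClass) : GraphClass :=
  fun α inst G => @MemGC C α inst G

/-- `S` is a union of `k` (possibly empty) cliques of `G`. -/
def UnionOfCliques (G : SimpleGraph V) (k : ℕ) (S : Set V) : Prop :=
  ∃ f : Fin k → Set V, (∀ i, G.IsClique (f i)) ∧ S = ⋃ i, f i

/-- `G ∈ 𝒢_k` : every minimal separator of `G` is a union of `k` cliques. -/
def MemGk (k : ℕ) (G : SimpleGraph V) : Prop :=
  ∀ S : Set V, IsMinimalSeparator G S → UnionOfCliques G k S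

/-- The class `𝒢_k`. -/
def Gkclass (k : ℕ) : GraphClass := fun _ _ G => MemGk k G

/-- The class `𝒞_k` of graphs whose vertex set is a union of `k` cliques. -/
def Ckclass (k : ℕ) : GraphClass := fun _ _ G => UnionOfCliques G k Set.univ

/-- An induced minor model of `H` in `G`. -/
def IsIMModel (G : SimpleGraph V) (H : SimpleGraph W) (X : W → Set V) : Prop :=
  (∀ w, (X w).Nonempty) ∧
  (∀ u w : W, u ≠ w → Disjoint (X u) (X w)) ∧
  (∀ w, (G.induce (X w)).Connected) ∧
  (∀ u w : W, u ≠ w → (H.Adj u w ↔ ∃ a ∈ X u, ∃ b ∈ X w, G.Adj a b))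

/-- `H` is an induced minor of `G`. -/
def IsInducedMinor (H : SimpleGraph W) (G : SimpleGraph V) : Prop :=
  ∃ X : W → Set V, IsIMModel G H X

/-- The class `C` is closed under induced minors. -/
def IMClosed (C : GraphClass) : Prop :=
  ∀ (α : Type) [Finite α] (G : SimpleGraph α) (β : Type) [Finite β] (H : SimpleGraph β),
    C α G → IsInducedMinor H G → C β H

/-- The class `C` is closed under the addition of edges. -/
def EdgeAddClosed (C : GraphClass) : Prop :=
  ∀ (α : Type) [Finite α] (G : SimpleGraph α) (a b : α), a ≠ b → ¬ G.Adj a b →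
    C α G → C α (G ⊔ SimpleGraph.edge a b)

/-- `G ∈ ℳ_C` : `G ∉ C` but every proper induced minor of `G` is in `C`.
(For finite graphs, the proper induced minors of `G` are exactly the induced minors of `G`
not isomorphic to `G`.) -/
def MemMC (C : GraphClass) {α : Type} [Finite α] (G : SimpleGraph α) : Prop :=
  ¬ C α G ∧
  ∀ (β : Type) [Finite β] (H : SimpleGraph β),
    IsInducedMinor H G → IsEmpty (H ≃g G) → C β H

/-- The complete join of two graphs. -/
def join (G : SimpleGraph V) (H : SimpleGraph W) : SimpleGraph (V ⊕ W) :=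
  SimpleGraph.fromRel (fun x y =>
    match x, y with
    | Sum.inl a, Sum.inl b => G.Adj a b
    | Sum.inr a, Sum.inr b => H.Adj a b
    | _, _ => True)

/-- The class `C` is closed under the addition of universal vertices (up to isomorphism). -/
def UnivAddClosed (C : GraphClass) : Prop :=
  ∀ (α : Type) [Finite α] (G : SimpleGraph α) (β : Type) [Finite β] (H : SimpleGraph β),
    C α G → Nonempty (H ≃g join (⊥ : SimpleGraph (Fin 1)) G) → C β H

/-- `G` has a universal vertex. -/
def HasUniversalVertex (G : SimpleGraph V) : Prop :=
  ∃ v : V, ∀ w : V, w ≠ v → G.Adj v w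

/-- `G` is a theta: two nonadjacent vertices joined by three internally disjoint induced
paths of length at least two, with no other vertices or edges
(equivalently, a subdivision of `K_{2,3}`). -/
def IsTheta (G : SimpleGraph V) : Prop :=
  ∃ (a b : V) (P₁ P₂ P₃ : G.Walk a b),
    a ≠ b ∧
    P₁.IsPath ∧ P₂.IsPath ∧ P₃.IsPath ∧
    2 ≤ P₁.length ∧ 2 ≤ P₂.length ∧ 2 ≤ P₃.length ∧
    (∀ v : V, v ∈ P₁.support → v ∈ P₂.support → v = a ∨ v = b) ∧
    (∀ v : V, v ∈ P₁.support → v ∈ P₃.support → v = a ∨ v = b) ∧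
    (∀ v : V, v ∈ P₂.support → v ∈ P₃.support → v = a ∨ v = b) ∧
    (∀ v : V, v ∈ P₁.support ∨ v ∈ P₂.support ∨ v ∈ P₃.support) ∧
    (∀ u v : V, G.Adj u v ↔
      s(u, v) ∈ P₁.edges ∨ s(u, v) ∈ P₂.edges ∨ s(u, v) ∈ P₃.edges)

/-- `G` is a pyramid: an apex `a` joined to a triangle `b₁b₂b₃` by three paths sharing only
`a`, at least two of which have length at least two, with no other vertices or edges. -/
def IsPyramid (G : SimpleGraph V) : Prop :=
  ∃ (a b₁ b₂ b₃ : V) (P₁ : G.Walk a b₁) (P₂ : G.Walk a b₂) (P₃ : G.Walk a b₃),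
    G.Adj b₁ b₂ ∧ G.Adj b₁ b₃ ∧ G.Adj b₂ b₃ ∧
    P₁.IsPath ∧ P₂.IsPath ∧ P₃.IsPath ∧
    1 ≤ P₁.length ∧ 1 ≤ P₂.length ∧ 1 ≤ P₃.length ∧
    ((2 ≤ P₁.length ∧ 2 ≤ P₂.length) ∨ (2 ≤ P₁.length ∧ 2 ≤ P₃.length) ∨
      (2 ≤ P₂.length ∧ 2 ≤ P₃.length)) ∧
    (∀ v : V, v ∈ P₁.support → v ∈ P₂.support → v = a) ∧
    (∀ v : V, v ∈ P₁.support → v ∈ P₃.support → v = a) ∧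
    (∀ v : V, v ∈ P₂.support → v ∈ P₃.support → v = a) ∧
    (∀ v : V, v ∈ P₁.support ∨ v ∈ P₂.support ∨ v ∈ P₃.support) ∧
    (∀ u v : V, G.Adj u v ↔
      s(u, v) ∈ P₁.edges ∨ s(u, v) ∈ P₂.edges ∨ s(u, v) ∈ P₃.edges ∨
      s(u, v) = s(b₁, b₂) ∨ s(u, v) = s(b₁, b₃) ∨ s(u, v) = s(b₂, b₃))

/-- `G` is a prism: two disjoint triangles joined by three pairwise disjoint paths, with no
other vertices or edges. -/
def IsPrism (G : SimpleGraph V) : Prop :=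
  ∃ (a₁ a₂ a₃ b₁ b₂ b₃ : V) (P₁ : G.Walk a₁ b₁) (P₂ : G.Walk a₂ b₂) (P₃ : G.Walk a₃ b₃),
    G.Adj a₁ a₂ ∧ G.Adj a₁ a₃ ∧ G.Adj a₂ a₃ ∧
    G.Adj b₁ b₂ ∧ G.Adj b₁ b₃ ∧ G.Adj b₂ b₃ ∧
    P₁.IsPath ∧ P₂.IsPath ∧ P₃.IsPath ∧
    1 ≤ P₁.length ∧ 1 ≤ P₂.length ∧ 1 ≤ P₃.length ∧
    (∀ v : V, v ∈ P₁.support → v ∈ P₂.support → False) ∧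
    (∀ v : V, v ∈ P₁.support → v ∈ P₃.support → False) ∧
    (∀ v : V, v ∈ P₂.support → v ∈ P₃.support → False) ∧
    (∀ v : V, v ∈ P₁.support ∨ v ∈ P₂.support ∨ v ∈ P₃.support) ∧
    (∀ u v : V, G.Adj u v ↔
      s(u, v) ∈ P₁.edges ∨ s(u, v) ∈ P₂.edges ∨ s(u, v) ∈ P₃.edges ∨
      s(u, v) = s(a₁, a₂) ∨ s(u, v) = s(a₁, a₃) ∨ s(u, v) = s(a₂, a₃) ∨
      s(u, v) = s(b₁, b₂) ∨ s(u, v) = s(b₁, b₃) ∨ s(u, v) = s(b₂, b₃))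

/-- `G` is a long prism: a prism other than the complement of `C₆`, i.e. a prism in which at
least one of the three paths has length at least two. -/
def IsLongPrism (G : SimpleGraph V) : Prop :=
  ∃ (a₁ a₂ a₃ b₁ b₂ b₃ : V) (P₁ : G.Walk a₁ b₁) (P₂ : G.Walk a₂ b₂) (P₃ : G.Walk a₃ b₃),
    G.Adj a₁ a₂ ∧ G.Adj a₁ a₃ ∧ G.Adj a₂ a₃ ∧
    G.Adj b₁ b₂ ∧ G.Adj b₁ b₃ ∧ G.Adj b₂ b₃ ∧
    P₁.IsPath ∧ P₂.IsPath ∧ P₃.IsPath ∧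
    1 ≤ P₁.length ∧ 1 ≤ P₂.length ∧ 1 ≤ P₃.length ∧
    (2 ≤ P₁.length ∨ 2 ≤ P₂.length ∨ 2 ≤ P₃.length) ∧
    (∀ v : V, v ∈ P₁.support → v ∈ P₂.support → False) ∧
    (∀ v : V, v ∈ P₁.support → v ∈ P₃.support → False) ∧
    (∀ v : V, v ∈ P₂.support → v ∈ P₃.support → False) ∧
    (∀ v : V, v ∈ P₁.support ∨ v ∈ P₂.support ∨ v ∈ P₃.support) ∧
    (∀ u v : V, G.Adj u v ↔
      s(u, v) ∈ P₁.edges ∨ s(u, v) ∈ P₂.edges ∨ s(u, v) ∈ P₃.edges ∨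
      s(u, v) = s(a₁, a₂) ∨ s(u, v) = s(a₁, a₃) ∨ s(u, v) = s(a₂, a₃) ∨
      s(u, v) = s(b₁, b₂) ∨ s(u, v) = s(b₁, b₃) ∨ s(u, v) = s(b₂, b₃))

/-- `G` is a wheel: a hole (chordless cycle of length at least four) together with one
additional vertex having at least three neighbors on the hole. -/
def IsWheel (G : SimpleGraph V) : Prop :=
  ∃ (v x : V) (c : G.Walk x x),
    c.IsCycle ∧ 4 ≤ c.length ∧ v ∉ c.support ∧
    (∀ u : V, u = v ∨ u ∈ c.support) ∧
    (∀ u w : V, u ∈ c.support → w ∈ c.support → G.Adj u w → s(u, w) ∈ c.edges) ∧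
    3 ≤ {u : V | u ∈ c.support ∧ G.Adj v u}.ncard

/-- `G` is a broken wheel: a wheel in which the neighbors of the additional vertex induce a
disconnected subgraph of the hole. -/
def IsBrokenWheel (G : SimpleGraph V) : Prop :=
  ∃ (v x : V) (c : G.Walk x x),
    c.IsCycle ∧ 4 ≤ c.length ∧ v ∉ c.support ∧
    (∀ u : V, u = v ∨ u ∈ c.support) ∧
    (∀ u w : V, u ∈ c.support → w ∈ c.support → G.Adj u w → s(u, w) ∈ c.edges) ∧
    3 ≤ {u : V | u ∈ c.support ∧ G.Adj v u}.ncard ∧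
    ¬ (G.induce {u : V | u ∈ c.support ∧ G.Adj v u}).Connected

/-- `G` is diamond-free: it has no induced subgraph isomorphic to `K₄` minus an edge. -/
def DiamondFree (G : SimpleGraph V) : Prop :=
  ¬ ∃ a b c d : V, c ≠ d ∧ G.Adj a b ∧ G.Adj a c ∧ G.Adj a d ∧ G.Adj b c ∧ G.Adj b d ∧
    ¬ G.Adj c d

/-- The short `n`-prism: two `n`-vertex cliques joined by a perfect matching. -/
def completePrism (n : ℕ) : SimpleGraph (Fin n ⊕ Fin n) :=
  SimpleGraph.fromRel (fun x y =>
    match x, y with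
    | Sum.inl _, Sum.inl _ => True
    | Sum.inr _, Sum.inr _ => True
    | Sum.inl i, Sum.inr j => i = j
    | Sum.inr i, Sum.inl j => i = j)

/-- `G` is a complete prism, i.e. a short `n`-prism for some `n ≥ 3`. -/
def IsCompletePrism (G : SimpleGraph V) : Prop :=
  ∃ n : ℕ, 3 ≤ n ∧ Nonempty (G ≃g completePrism n)

/-- `G` is a cycle. -/
def IsCycleGraph (G : SimpleGraph V) : Prop :=
  ∃ n : ℕ, 3 ≤ n ∧ Nonempty (G ≃g cycleGraph n)

/-- `G` is a complete graph. -/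
def IsCompleteGraph (G : SimpleGraph V) : Prop :=
  ∀ u v : V, u ≠ v → G.Adj u v

/-- `G` has a clique-cutset. -/
def HasCliqueCutset (G : SimpleGraph V) : Prop :=
  ∃ K : Set V, G.IsClique K ∧ IsCutset G K

section Development

variable {α β γ : Type}

section Join

variable {A : SimpleGraph α} {H : SimpleGraph W}

@[simp] lemma join_adj_inl_inl {a b : α} : (join A H).Adj (.inl a) (.inl b) ↔ A.Adj a b := by
  simpa [join, A.adj_comm b a] using fun h : A.Adj a b => h.ne

@[simp] lemma join_adj_inr_inr {a b : W} : (join A H).Adj (.inr a) (.inr b) ↔ H.Adj a b := by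
  simpa [join, H.adj_comm b a] using fun h : H.Adj a b => h.ne

@[simp] lemma join_adj_inl_inr {a : α} {b : W} : (join A H).Adj (.inl a) (.inr b) := by
  simp [join]

@[simp] lemma join_adj_inr_inl {a : W} {b : α} : (join A H).Adj (.inr a) (.inl b) := by
  simp [join]

variable (A) in
def joinInr : H ↪g join A H where
  toFun := Sum.inr
  inj' := Sum.inr_injective
  map_rel_iff' := join_adj_inr_inr

variable (A) in
def joinMapRight {H' : SimpleGraph γ} (f : H ↪g H') : join A H ↪g join A H' where
  toFun := Sum.map id f
  inj' := Sum.map_injective.2 ⟨Function.injective_id, f.injective⟩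
  map_rel_iff' := by rintro (a | a) (b | b) <;> simp

end Join

noncomputable def joinBotIsoInduce {ι : Type} (G : SimpleGraph V) (T : Set V) (f : ι → V)
    (hf : Function.Injective f) (hfT : ∀ i, f i ∈ T) (hind : ∀ i j, ¬ G.Adj (f i) (f j))
    (hadj : ∀ i, ∀ v ∈ T, v ∉ Set.range f → G.Adj (f i) v) :
    join (⊥ : SimpleGraph ι) (G.induce (T \ Set.range f)) ≃g G.induce T where
  toEquiv := Equiv.ofBijective (Sum.elim (fun i => ⟨f i, hfT i⟩) (fun v => ⟨v, v.2.1⟩)) <| by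
    refine ⟨?_, fun v => ?_⟩
    · rintro (i | v) (j | w) h <;> simp only [Sum.elim_inl, Sum.elim_inr, Subtype.mk.injEq] at h
      · rw [hf h]
      · exact absurd ⟨i, h⟩ w.2.2
      · exact absurd ⟨j, h.symm⟩ v.2.2
      · rw [Subtype.ext h]
    · by_cases hv : v.1 ∈ Set.range f
      · obtain ⟨i, hi⟩ := hv
        exact ⟨.inl i, Subtype.ext hi⟩
      · exact ⟨.inr ⟨v, v.2, hv⟩, rfl⟩
  map_rel_iff' := by
    rintro (i | v) (j | w)
    · simpa [Equiv.ofBijective] using hind i j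
    · simpa [Equiv.ofBijective] using hadj i w w.2.1 w.2.2
    · simpa [Equiv.ofBijective, G.adj_comm] using hadj j v v.2.1 v.2.2
    · simp [Equiv.ofBijective]

lemma connected_induce_singleton (G : SimpleGraph V) (v : V) : (G.induce {v}).Connected :=
  (connected_iff _).2 ⟨.of_subsingleton, ⟨⟨v, rfl⟩⟩⟩

noncomputable def Embedding.induceIsoImage {G : SimpleGraph V} {G' : SimpleGraph W}
    (f : G ↪g G') (s : Set V) : G.induce s ≃g G'.induce (f '' s) where
  toEquiv := Equiv.Set.image f s f.injective
  map_rel_iff' := by simp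

lemma Embedding.connected_induce_image {G : SimpleGraph V} {G' : SimpleGraph W} (f : G ↪g G')
    {s : Set V} : (G'.induce (f '' s)).Connected ↔ (G.induce s).Connected :=
  (Embedding.induceIsoImage f s).connected_iff.symm

lemma connected_induce_biUnion {M : SimpleGraph W} {G : SimpleGraph V} {Y : W → Set V}
    (hY : ∀ m, (G.induce (Y m)).Connected)
    (hYadj : ∀ m m', M.Adj m m' → ∃ a ∈ Y m, ∃ b ∈ Y m', G.Adj a b)
    {s : Set W} (hs : (M.induce s).Connected) : (G.induce (⋃ m ∈ s, Y m)).Connected := by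
  set U := ⋃ m ∈ s, Y m
  have hYU : ∀ {m}, m ∈ s → Y m ⊆ U := fun hm _ hv => Set.mem_biUnion hm hv
  obtain ⟨⟨m₀, hm₀⟩⟩ := hs.nonempty
  obtain ⟨⟨u, hu⟩⟩ := (hY m₀).nonempty
  have huU : u ∈ U := hYU hm₀ hu
  set R := {v | ∃ hv : v ∈ U, (G.induce U).Reachable ⟨u, huU⟩ ⟨v, hv⟩}
  have hstep : ∀ {m} (hm : m ∈ s) {a} (ha : a ∈ Y m), a ∈ R → Y m ⊆ R := by
    rintro m hm a ha ⟨_, hua⟩ v hv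
    refine ⟨hYU hm hv, hua.trans ?_⟩
    exact ((hY m).preconnected ⟨a, ha⟩ ⟨v, hv⟩).map (G.induceHomOfLE (hYU hm)).toHom
  have hwalk : ∀ {m m'} (p : (M.induce s).Walk m m'), Y m.1 ⊆ R → Y m'.1 ⊆ R := by
    intro m m' p
    induction p with
    | nil => exact id
    | @cons m m'' _ hadj _ ih =>
      intro hR
      obtain ⟨a, ha, b, hb, hab⟩ := hYadj _ _ hadj
      obtain ⟨_, hua⟩ := hR ha
      exact ih (hstep m''.2 hb ⟨hYU m''.2 hb, hua.trans (Adj.reachable hab)⟩)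
  refine (connected_iff_exists_forall_reachable _).2 ⟨⟨u, huU⟩, fun ⟨v, hv⟩ => ?_⟩
  obtain ⟨m, hm, hvm⟩ := Set.mem_iUnion₂.1 hv
  obtain ⟨p⟩ := hs.preconnected ⟨m₀, hm₀⟩ ⟨m, hm⟩
  exact (hwalk p (hstep hm₀ hu ⟨huU, .refl _⟩) hvm).2

namespace IsIMModel

variable {G : SimpleGraph V} {F : SimpleGraph β} {X : β → Set V}

lemma comap (hX : IsIMModel G F X) {F' : SimpleGraph γ} (f : F' ↪g F) :
    IsIMModel G F' (X ∘ f) := by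
  obtain ⟨hne, hdisj, hconn, hadj⟩ := hX
  refine ⟨fun w => hne _, fun u w huw => hdisj _ _ (f.injective.ne huw), fun w => hconn _,
    fun u w huw => ?_⟩
  rw [← f.map_adj_iff]
  exact hadj _ _ (f.injective.ne huw)

lemma map (hX : IsIMModel G F X) {G' : SimpleGraph W} (f : G ↪g G') :
    IsIMModel G' F (fun w => f '' X w) := by
  obtain ⟨hne, hdisj, hconn, hadj⟩ := hX
  refine ⟨fun w => (hne w).image _, fun u w huw => ?_,
    fun w => (Embedding.connected_induce_image f).2 (hconn w), fun u w huw => ?_⟩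
  · exact (Set.disjoint_image_iff f.injective).2 (hdisj u w huw)
  · simp [hadj u w huw]

lemma preimage {G' : SimpleGraph W} (f : G ↪g G') {Y : β → Set W} (hY : IsIMModel G' F Y)
    (hYf : ∀ w, Y w ⊆ Set.range f) : IsIMModel G F (fun w => f ⁻¹' Y w) := by
  obtain ⟨hne, hdisj, hconn, hadj⟩ := hY
  refine ⟨fun w => ?_, fun u w huw => (hdisj u w huw).preimage f, fun w => ?_, fun u w huw => ?_⟩
  · obtain ⟨x, hx⟩ := hne w
    obtain ⟨v, rfl⟩ := hYf w hx
    exact ⟨v, hx⟩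
  · rw [← Embedding.connected_induce_image f, Set.image_preimage_eq_of_subset (hYf w)]
    exact hconn w
  · rw [hadj u w huw]
    constructor
    · rintro ⟨x, hx, y, hy, hxy⟩
      obtain ⟨a, rfl⟩ := hYf u hx
      obtain ⟨b, rfl⟩ := hYf w hy
      exact ⟨a, hx, b, hy, f.map_adj_iff.1 hxy⟩
    · rintro ⟨a, ha, b, hb, hab⟩
      exact ⟨f a, ha, f b, hb, f.map_adj_iff.2 hab⟩

lemma exists_injective_mem (hX : IsIMModel G F X) :
    ∃ f : β → V, Function.Injective f ∧ ∀ w, f w ∈ X w := by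
  refine ⟨fun w => (hX.1 w).some, fun u w huw => ?_, fun w => (hX.1 w).some_mem⟩
  by_contra hne
  have hw := (hX.1 w).some_mem
  dsimp only at huw
  rw [← huw] at hw
  exact Set.disjoint_left.1 (hX.2.1 u w hne) (hX.1 u).some_mem hw

end IsIMModel

namespace IsInducedMinor

lemma trans {F : SimpleGraph β} {M : SimpleGraph W} {G : SimpleGraph V}
    (h₁ : IsInducedMinor F M) (h₂ : IsInducedMinor M G) : IsInducedMinor F G := by
  obtain ⟨X, hXne, hXdisj, hXconn, hXadj⟩ := h₁
  obtain ⟨Y, hYne, hYdisj, hYconn, hYadj⟩ := h₂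
  have hYadj' : ∀ m m', M.Adj m m' → ∃ a ∈ Y m, ∃ b ∈ Y m', G.Adj a b :=
    fun m m' h => (hYadj m m' h.ne).1 h
  refine ⟨fun w => ⋃ m ∈ X w, Y m, fun w => ?_, fun u w huw => ?_,
    fun w => connected_induce_biUnion hYconn hYadj' (hXconn w), fun u w huw => ?_⟩
  · obtain ⟨m, hm⟩ := hXne w
    exact (hYne m).mono (Set.subset_biUnion_of_mem hm)
  · simp only [Set.disjoint_iUnion_left, Set.disjoint_iUnion_right]
    intro m hm m' hm'
    refine hYdisj m' m ?_
    rintro rfl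
    exact Set.disjoint_left.1 (hXdisj u w huw) hm' hm
  · rw [hXadj u w huw]
    simp only [Set.mem_iUnion, exists_prop]
    constructor
    · rintro ⟨m, hm, m', hm', hmm'⟩
      obtain ⟨a, ha, b, hb, hab⟩ := hYadj' m m' hmm'
      exact ⟨a, ⟨m, hm, ha⟩, b, ⟨m', hm', hb⟩, hab⟩
    · rintro ⟨a, ⟨m, hm, ha⟩, b, ⟨m', hm', hb⟩, hab⟩
      have hmm' : m ≠ m' := by
        rintro rfl
        exact Set.disjoint_left.1 (hXdisj u w huw) hm hm'
      exact ⟨m, hm, m', hm', (hYadj m m' hmm').2 ⟨a, ha, b, hb, hab⟩⟩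

lemma of_iso_right {F : SimpleGraph β} {G : SimpleGraph V} {G' : SimpleGraph W}
    (h : IsInducedMinor F G) (e : G ≃g G') : IsInducedMinor F G' :=
  let ⟨_, hX⟩ := h
  ⟨_, hX.map e.toEmbedding⟩

lemma join {A : SimpleGraph α} {H' : SimpleGraph β} {H : SimpleGraph W}
    (h : IsInducedMinor H' H) : IsInducedMinor (join A H') (join A H) := by
  obtain ⟨Y, hYne, hYdisj, hYconn, hYadj⟩ := h
  refine ⟨Sum.elim (fun a => {.inl a}) (fun w => .inr '' Y w), ?_, ?_, ?_, ?_⟩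
  · rintro (a | w)
    exacts [Set.singleton_nonempty _, (hYne w).image _]
  · rintro (a | w) (a' | w') h
    · simpa using h
    · simp
    · simp
    · exact (Set.disjoint_image_iff Sum.inr_injective).2 (hYdisj w w' fun h' => h (h' ▸ rfl))
  · rintro (a | w)
    · exact connected_induce_singleton _ _
    · exact (Embedding.connected_induce_image (joinInr A)).2 (hYconn w)
  · rintro (a | w) (a' | w') h
    · simp
    · obtain ⟨y, hy⟩ := hYne w'
      simpa using ⟨y, hy⟩
    · obtain ⟨y, hy⟩ := hYne w
      simpa using ⟨y, hy⟩
    · simp [hYadj w w' fun h' => h (h' ▸ rfl)]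

section Card

variable [Finite V] {F : SimpleGraph β} {G : SimpleGraph V}

lemma card_le (h : IsInducedMinor F G) : Nat.card β ≤ Nat.card V :=
  let ⟨_, hX⟩ := h
  let ⟨f, hf, _⟩ := hX.exists_injective_mem
  Nat.card_le_card_of_injective f hf

/-- A model on as many vertices as its host has singleton branch sets. -/
lemma nonempty_iso_of_card_eq (h : IsInducedMinor F G) (hc : Nat.card β = Nat.card V) :
    Nonempty (F ≃g G) := by
  obtain ⟨X, hXmodel⟩ := h
  obtain ⟨f, hinj, hf⟩ := hXmodel.exists_injective_mem
  obtain ⟨-, hXdisj, -, hXadj⟩ := hXmodel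
  have hbij : Function.Bijective f := (Nat.bijective_iff_injective_and_card f).2 ⟨hinj, hc⟩
  have hX : ∀ w, X w = {f w} := by
    refine fun w => Set.eq_singleton_iff_unique_mem.2 ⟨hf w, fun x hx => ?_⟩
    obtain ⟨w', rfl⟩ := hbij.2 x
    by_contra hne
    exact Set.disjoint_left.1 (hXdisj w' w fun h => hne (h ▸ rfl)) (hf w') hx
  refine ⟨⟨Equiv.ofBijective f hbij, fun {u w} => ?_⟩⟩
  rcases eq_or_ne u w with rfl | huw
  · simp
  · simp [hXadj u w huw, hX]

lemma card_lt (h : IsInducedMinor F G) (hFG : IsEmpty (F ≃g G)) : Nat.card β < Nat.card V :=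
  h.card_le.lt_of_ne fun hc => hFG.false (h.nonempty_iso_of_card_eq hc).some

end Card

end IsInducedMinor

lemma isEmpty_iso_of_card_lt {F : SimpleGraph β} {G : SimpleGraph V}
    (h : Nat.card β < Nat.card V) : IsEmpty (F ≃g G) :=
  ⟨fun e => h.ne (Nat.card_congr e.toEquiv)⟩

section Separators

variable {G : SimpleGraph V} {S T : Set V} {a b x y : V}

lemma ConnAvoid.notMem_right (h : ConnAvoid G S x y) : y ∉ S :=
  let ⟨p, hp⟩ := h
  hp y p.end_mem_support

lemma connAvoid_refl (hx : x ∉ S) : ConnAvoid G S x x :=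
  ⟨.nil, by simpa using hx⟩

lemma ConnAvoid.symm (h : ConnAvoid G S x y) : ConnAvoid G S y x :=
  let ⟨p, hp⟩ := h
  ⟨p.reverse, by simpa using hp⟩

lemma ConnAvoid.trans {z : V} (h : ConnAvoid G S x y) (h' : ConnAvoid G S y z) :
    ConnAvoid G S x z :=
  let ⟨p, hp⟩ := h
  let ⟨q, hq⟩ := h'
  ⟨p.append q, fun v hv => (Walk.mem_support_append_iff _ _).1 hv |>.elim (hp v) (hq v)⟩

lemma ConnAvoid.of_adj (hxy : G.Adj x y) (hx : x ∉ S) (hy : y ∉ S) : ConnAvoid G S x y :=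
  ⟨.cons hxy .nil, by simp [hx, hy]⟩

lemma IsMinSep.symm (h : IsMinSep G a b T) : IsMinSep G b a T :=
  ⟨⟨h.1.2.1, h.1.1, fun hc => h.1.2.2 hc.symm⟩,
    fun T' hT' hsep => h.2 T' hT' ⟨hsep.2.1, hsep.1, fun hc => hsep.2.2 hc.symm⟩⟩

lemma exists_connAvoid_adj_of_walk :
    ∀ {x y : V} (p : G.Walk x y), x ∉ S → y ∈ S →
      ∃ u v, ConnAvoid G S x u ∧ v ∈ S ∧ v ∈ p.support ∧ G.Adj u v
  | _, _, .nil, hx, hy => absurd hy hx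
  | x, _, .cons (v := x') hxx' p, hx, hy => by
    by_cases hx' : x' ∈ S
    · exact ⟨x, x', connAvoid_refl hx, hx', by simp, hxx'⟩
    · obtain ⟨u, v, hu, hv, hvp, huv⟩ := exists_connAvoid_adj_of_walk p hx' hy
      exact ⟨u, v, (ConnAvoid.of_adj hxx' hx hx').trans hu, hv, by simp [hvp], huv⟩

/-- By minimality, some `a`–`b` walk meets `T` only in `t`. -/
lemma IsMinSep.exists_connAvoid_adj (h : IsMinSep G a b T) {t : V} (ht : t ∈ T) :
    ∃ c, ConnAvoid G T a c ∧ G.Adj c t := by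
  classical
  obtain ⟨⟨haT, hbT, hsep⟩, hmin⟩ := h
  have hconn : ConnAvoid G (T \ {t}) a b := by
    by_contra hc
    exact hmin _ (Set.sdiff_singleton_ssubset.2 ht) ⟨fun h => haT h.1, fun h => hbT h.1, hc⟩
  obtain ⟨p, hp⟩ := hconn
  have htp : t ∈ p.support := by
    by_contra htp
    exact hsep ⟨p, fun v hv hvT => hp v hv ⟨hvT, fun hvt => htp (hvt ▸ hv)⟩⟩
  obtain ⟨c, v, hc, hvT, hvp, hcv⟩ := exists_connAvoid_adj_of_walk (p.takeUntil t htp) haT ht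
  have hvt : v = t := by
    by_contra hvt
    exact hp v (p.support_takeUntil_subset_support htp hvp) ⟨hvT, hvt⟩
  exact ⟨c, hc, hvt ▸ hcv⟩

lemma connected_induce_connAvoid (hx : x ∉ S) :
    (G.induce {v | ConnAvoid G S x v}).Connected := by
  classical
  refine induce_connected_of_patches x (connAvoid_refl hx) fun {v} ⟨p, hp⟩ => ?_
  refine ⟨{w | w ∈ p.support}, fun w hw => ?_, p.start_mem_support, p.end_mem_support,
    p.connected_induce_support.preconnected _ _⟩
  exact ⟨p.takeUntil w hw, fun u hu => hp u (p.support_takeUntil_subset_support hw hu)⟩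

lemma isIMModel_join_bot_induce {ι : Type} {A : ι → Set V} (hne : ∀ i, (A i).Nonempty)
    (hconn : ∀ i, (G.induce (A i)).Connected) (hAT : ∀ i, Disjoint (A i) T)
    (hsep : ∀ i j, i ≠ j → ∀ x ∈ A i, ∀ y ∈ A j, x ≠ y ∧ ¬ G.Adj x y)
    (hadj : ∀ i, ∀ t ∈ T, ∃ x ∈ A i, G.Adj x t) :
    IsIMModel G (join (⊥ : SimpleGraph ι) (G.induce T)) (Sum.elim A fun t => {t.1}) := by
  refine ⟨?_, ?_, ?_, ?_⟩
  · rintro (i | t)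
    exacts [hne i, Set.singleton_nonempty _]
  · rintro (i | t) (j | t') h
    · exact Set.disjoint_left.2 fun x hx hx' => (hsep i j (by simpa using h) x hx x hx').1 rfl
    · simpa using fun h => Set.disjoint_left.1 (hAT i) h t'.2
    · simpa using fun h => Set.disjoint_left.1 (hAT j) h t.2
    · simpa using Subtype.coe_injective.ne fun h' => h (congrArg Sum.inr h')
  · rintro (i | t)
    exacts [hconn i, connected_induce_singleton _ _]
  · rintro (i | t) (j | t') h
    · simpa using fun x hx y hy => (hsep i j (by simpa using h) x hx y hy).2
    · simpa using hadj i t' t'.2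
    · simpa [G.adj_comm] using hadj j t t.2
    · simp

lemma IsMinSep.isInducedMinor_join (h : IsMinSep G a b T) :
    IsInducedMinor (join (⊥ : SimpleGraph (Fin 2)) (G.induce T)) G := by
  have hsep : ∀ x, ConnAvoid G T a x → ∀ y, ConnAvoid G T b y → x ≠ y ∧ ¬ G.Adj x y := by
    refine fun x hx y hy => ⟨fun hxy => h.1.2.2 (hx.trans (hxy ▸ hy.symm)), fun hxy => ?_⟩
    exact h.1.2.2 ((hx.trans (.of_adj hxy hx.notMem_right hy.notMem_right)).trans hy.symm)
  refine ⟨_, isIMModel_join_bot_induce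
    (A := ![{v | ConnAvoid G T a v}, {v | ConnAvoid G T b v}]) ?_ ?_ ?_ ?_ ?_⟩
  · simpa [Fin.forall_fin_two] using ⟨⟨a, connAvoid_refl h.1.1⟩, ⟨b, connAvoid_refl h.1.2.1⟩⟩
  · simpa [Fin.forall_fin_two] using
      ⟨connected_induce_connAvoid h.1.1, connected_induce_connAvoid h.1.2.1⟩
  · simpa [Fin.forall_fin_two, Set.disjoint_left] using
      ⟨fun _ hv => hv.notMem_right, fun _ hv => hv.notMem_right⟩
  · simpa [Fin.forall_fin_two] using
      ⟨hsep, fun x hx y hy => (hsep y hy x hx).imp Ne.symm fun h' hxy => h' hxy.symm⟩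
  · simpa [Fin.forall_fin_two] using
      ⟨fun t ht => h.exists_connAvoid_adj ht, fun t ht => h.symm.exists_connAvoid_adj ht⟩

lemma isMinSep_of_forall_adj (hne : a ≠ b) (hab : ¬ G.Adj a b) (haS : a ∉ S) (hbS : b ∉ S)
    (hcover : ∀ v, v = a ∨ v = b ∨ v ∈ S) (hS : ∀ s ∈ S, G.Adj a s ∧ G.Adj s b) :
    IsMinSep G a b S := by
  refine ⟨⟨haS, hbS, ?_⟩, fun T hT hsep => ?_⟩
  · rintro ⟨_ | ⟨hac, p⟩, hp⟩
    · exact hne rfl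
    · rename_i c
      rcases hcover c with rfl | rfl | hc
      · exact hac.ne rfl
      · exact hab hac
      · exact hp c (by simp) hc
  · obtain ⟨s, hsS, hsT⟩ := Set.exists_of_ssubset hT
    exact hsep.2.2
      ((ConnAvoid.of_adj (hS s hsS).1 hsep.1 hsT).trans (.of_adj (hS s hsS).2 hsT hsep.2.1))

end Separators

section Classes

variable {C : GraphClass}

lemma Hereditary.of_iso (hC : Hereditary C) [Finite α] [Finite β] {G : SimpleGraph α}
    {H : SimpleGraph β} (e : H ≃g G) (hG : C α G) : C β H :=
  hC α G β H Set.univ ⟨e.trans G.induceUnivIso.symm⟩ hG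

lemma MemMC.mem_of_card_lt [Finite W] [Finite β] {H : SimpleGraph W} (hH : MemMC C H)
    {Y : SimpleGraph β} (hY : IsInducedMinor Y H) (hc : Nat.card β < Nat.card W) : C β Y :=
  hH.2 β Y hY (isEmpty_iso_of_card_lt hc)

lemma UnivAddClosed.mem_induce_of_forall_adj (hU : UnivAddClosed C)
    [Finite α] {G : SimpleGraph α} {s T : Set α} (hsT : s ⊆ T)
    (huniv : ∀ z ∈ T \ s, ∀ v ∈ T, v ≠ z → G.Adj z v) (hs : C s (G.induce s)) :
    C T (G.induce T) := by
  induction hn : (T \ s).ncard generalizing T with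
  | zero =>
    obtain rfl : T = s := by
      rw [Set.ncard_eq_zero (T.toFinite.sdiff), Set.sdiff_eq_empty] at hn
      exact hn.antisymm hsT
    exact hs
  | succ n ih =>
    obtain ⟨z, hzT, hzs⟩ : (T \ s).Nonempty := Set.nonempty_of_ncard_ne_zero (by omega)
    have hsub : T \ {z} ⊆ T := Set.sdiff_subset
    have hC' : C ↥(T \ Set.range fun _ : Fin 1 => z)
        (G.induce (T \ Set.range fun _ : Fin 1 => z)) := by
      rw [Set.range_const]
      refine ih (fun v hv => ⟨hsT hv, fun h => hzs (h ▸ hv)⟩)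
        (fun y hy v hv => huniv y ⟨hsub hy.1, hy.2⟩ v (hsub hv)) ?_
      have hz : z ∈ T \ s := ⟨hzT, hzs⟩
      rw [Set.sdiff_sdiff_comm, Set.ncard_sdiff_singleton_of_mem hz, hn]
      rfl
    refine hU _ _ _ _ hC' ⟨(joinBotIsoInduce G T _ (Function.injective_of_subsingleton _)
      (fun _ => hzT) (fun _ _ => G.irrefl) (fun _ v hv hvz => huniv z ⟨hzT, hzs⟩ v hv ?_)).symm⟩
    exact fun h => hvz ⟨0, h.symm⟩

lemma mem_of_memGC_of_iso (hC : Hereditary C) [Finite V] [Finite W] {F : SimpleGraph V}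
    {H : SimpleGraph W} (e : F ≃g join (⊥ : SimpleGraph (Fin 2)) H) (hF : MemGC C F) :
    C W H := by
  let f : H ↪g F := e.symm.toEmbedding.comp (joinInr ⊥)
  have hS : IsMinimalSeparator F (f '' Set.univ) := by
    refine ⟨e.symm (.inl 0), e.symm (.inl 1), by simp, by simp [e.symm.map_adj_iff],
      isMinSep_of_forall_adj (by simp) (by simp [e.symm.map_adj_iff]) ?_ ?_ (fun v => ?_) ?_⟩
    · simp [f, joinInr]
    · simp [f, joinInr]
    · obtain ⟨x, rfl⟩ := e.symm.surjective v
      rcases x with (i | w)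
      · fin_cases i <;> simp
      · simp [f, joinInr]
    · simp [f, joinInr, e.symm.map_adj_iff]
  exact hC.of_iso (H.induceUnivIso.symm.trans (Embedding.induceIsoImage f Set.univ)) (hF _ hS)

lemma exists_inr_mem_of_subset {s : Set (α ⊕ W)} (hs : s.Nonempty)
    (h : s ⊆ Set.range Sum.inr) : ∃ w, .inr w ∈ s := by
  obtain ⟨z, hz⟩ := hs
  obtain ⟨w, rfl⟩ := h hz
  exact ⟨w, hz⟩

lemma exists_inl_mem_of_not_subset {s : Set (α ⊕ W)} (h : ¬ s ⊆ Set.range Sum.inr) :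
    ∃ i, .inl i ∈ s := by
  obtain ⟨z, hz, hzr⟩ := Set.not_subset.1 h
  rcases z with i | w
  exacts [⟨i, hz⟩, absurd ⟨w, rfl⟩ hzr]

lemma IsIMModel.adj_of_inl_mem_of_inr_mem {A : SimpleGraph α} {H : SimpleGraph W}
    {F : SimpleGraph β} {Ψ : β → Set (α ⊕ W)} (hΨ : IsIMModel (join A H) F Ψ) {m m' : β}
    (hmm' : m ≠ m') {i : α} {w : W} (hi : .inl i ∈ Ψ m) (hw : .inr w ∈ Ψ m') : F.Adj m m' :=
  (hΨ.2.2.2 m m' hmm').2 ⟨_, hi, _, hw, join_adj_inl_inr⟩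

lemma MemMC.mem_of_isIMModel_join [Finite W] [Finite γ] {A : SimpleGraph α}
    {H : SimpleGraph W} (hH : MemMC C H) {M : SimpleGraph β} {Ψ : β → Set (α ⊕ W)}
    (hΨ : IsIMModel (join A H) M Ψ) {Y : SimpleGraph γ} (f : Y ↪g M)
    (hf : ∀ y, Ψ (f y) ⊆ Set.range Sum.inr) (hc : Nat.card γ < Nat.card W) : C γ Y :=
  hH.mem_of_card_lt ⟨_, (hΨ.comap f).preimage (joinInr A) hf⟩ hc

lemma mem_of_isIMModel_join_of_pairwise_adj (hC : Hereditary C) (hU : UnivAddClosed C)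
    [Finite W] [Finite β] {A : SimpleGraph α} {A' : SimpleGraph γ} {H : SimpleGraph W}
    (hH : MemMC C H) {X : SimpleGraph β} {Ψ : γ ⊕ β → Set (α ⊕ W)}
    (hΨ : IsIMModel (join A H) (join A' X) Ψ) (hcard : Nat.card β < Nat.card W)
    (hadj : ∀ x y, ¬ Ψ (.inr x) ⊆ Set.range Sum.inr → ¬ Ψ (.inr y) ⊆ Set.range Sum.inr →
      x ≠ y → X.Adj x y) :
    C β X := by
  set R := {x : β | Ψ (.inr x) ⊆ Set.range Sum.inr}
  have hR : C R (X.induce R) :=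
    hH.mem_of_isIMModel_join hΨ ((joinInr A').comp (Embedding.induce R)) (fun r => r.2)
      ((Finite.card_subtype_le _).trans_lt hcard)
  refine hC.of_iso X.induceUnivIso.symm
    (hU.mem_induce_of_forall_adj (Set.subset_univ R) (fun z hz v _ hvz => ?_) hR)
  by_cases hv : v ∈ R
  · obtain ⟨i, hi⟩ := exists_inl_mem_of_not_subset hz.2
    obtain ⟨w, hw⟩ := exists_inr_mem_of_subset (hΨ.1 _) hv
    simpa using hΨ.adj_of_inl_mem_of_inr_mem (by simpa using hvz.symm) hi hw
  · exact hadj z v hz.2 hv hvz.symm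

lemma mem_of_isIMModel_join_of_not_adj (hC : Hereditary C) [Finite W] [Finite β]
    {H : SimpleGraph W} (hH : MemMC C H) {X : SimpleGraph β}
    {Ψ : Fin 2 ⊕ β → Set (Fin 2 ⊕ W)}
    (hΨ : IsIMModel (join (⊥ : SimpleGraph (Fin 2)) H) (join (⊥ : SimpleGraph (Fin 2)) X) Ψ)
    (hcard : Nat.card β < Nat.card W) {x y : β} (hx : ¬ Ψ (.inr x) ⊆ Set.range Sum.inr)
    (hy : ¬ Ψ (.inr y) ⊆ Set.range Sum.inr) (hxy : x ≠ y) (hnadj : ¬ X.Adj x y) :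
    C β X := by
  obtain ⟨i, hi⟩ := exists_inl_mem_of_not_subset hx
  obtain ⟨j, hj⟩ := exists_inl_mem_of_not_subset hy
  have hdisj := fun {m m'} (h : m ≠ m') => Set.disjoint_left.1 (hΨ.2.1 m m' h)
  have hij : i ≠ j := by
    rintro rfl
    exact hdisj (by simpa using hxy) hi hj
  have hrest : ∀ m, m ≠ .inr x → m ≠ .inr y → Ψ m ⊆ Set.range Sum.inr := by
    rintro m hmx hmy (k | w) hk
    · obtain rfl | rfl : k = i ∨ k = j := by omega
      exacts [absurd hi (hdisj hmx hk), absurd hj (hdisj hmy hk)]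
    · exact ⟨w, rfl⟩
  let e := joinBotIsoInduce X Set.univ ![x, y] ?_ (fun _ => trivial) ?_ ?_
  · refine hC.of_iso (X.induceUnivIso.symm.trans e.symm)
      (hH.mem_of_isIMModel_join hΨ (joinMapRight ⊥ (Embedding.induce _)) ?_ ?_)
    · rintro (k | ⟨v, hv⟩)
      · exact hrest _ (by simp [joinMapRight]) (by simp [joinMapRight])
      · have hvxy : v ≠ y ∧ v ≠ x := by simpa using hv.2
        simpa [joinMapRight] using
          hrest (.inr v) (by simpa using hvxy.2) (by simpa using hvxy.1)
    · rwa [Nat.card_congr (e.trans X.induceUnivIso).toEquiv]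
  · simpa [Function.Injective, Fin.forall_fin_two] using ⟨hxy, hxy.symm⟩
  · simpa [Fin.forall_fin_two, X.adj_comm] using hnadj
  · intro k v _ hv
    have hvx : v ≠ x := fun h => hv ⟨0, by simp [h]⟩
    have hvy : v ≠ y := fun h => hv ⟨1, by simp [h]⟩
    obtain ⟨w, hw⟩ := exists_inr_mem_of_subset (hΨ.1 _)
      (hrest (.inr v) (by simpa using hvx) (by simpa using hvy))
    fin_cases k
    · simpa using hΨ.adj_of_inl_mem_of_inr_mem (by simpa using hvx.symm) hi hw
    · simpa using hΨ.adj_of_inl_mem_of_inr_mem (by simpa using hvy.symm) hj hw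

lemma mem_of_isInducedMinor_join (hC : Hereditary C) (hU : UnivAddClosed C) [Finite W]
    [Finite β] {H : SimpleGraph W} (hH : MemMC C H) {X : SimpleGraph β}
    (hXH : IsInducedMinor (join (⊥ : SimpleGraph (Fin 2)) X) (join (⊥ : SimpleGraph (Fin 2)) H))
    (hcard : Nat.card β < Nat.card W) : C β X := by
  obtain ⟨Ψ, hΨ⟩ := hXH
  by_cases hadj : ∀ x y, ¬ Ψ (.inr x) ⊆ Set.range Sum.inr → ¬ Ψ (.inr y) ⊆ Set.range Sum.inr →
      x ≠ y → X.Adj x y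
  · exact mem_of_isIMModel_join_of_pairwise_adj hC hU hH hΨ hcard hadj
  · push Not at hadj
    obtain ⟨x, y, hx, hy, hxy, hnadj⟩ := hadj
    exact mem_of_isIMModel_join_of_not_adj hC hH hΨ hcard hx hy hxy hnadj

end Classes

end Development

theorem statement_8_general (C : GraphClass) (hC : Hereditary C)
    (hU : UnivAddClosed C) (V : Type) [Finite V] (F : SimpleGraph V) :
    MemMC (GCclass C) F ↔
      ∃ (W : Type) (hW : Finite W) (H : SimpleGraph W),
        @MemMC C W hW H ∧ Nonempty (F ≃g join (⊥ : SimpleGraph (Fin 2)) H) := by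
  constructor
  · rintro ⟨hFnot, hFmin⟩
    obtain ⟨S, ⟨a, b, -, -, hS⟩, hSC⟩ : ∃ S, IsMinimalSeparator F S ∧ ¬ C S (F.induce S) := by
      by_contra! h
      exact hFnot h
    have hJ := hS.isInducedMinor_join
    obtain ⟨e⟩ : Nonempty (join ⊥ (F.induce S) ≃g F) := by
      by_contra h
      exact hSC (mem_of_memGC_of_iso hC (RelIso.refl _) (hFmin _ _ hJ (not_nonempty_iff.1 h)))
    refine ⟨S, inferInstance, F.induce S, ⟨hSC, fun β _ H' hH' hne => ?_⟩, ⟨e.symm⟩⟩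
    have hlt := hH'.card_lt hne
    refine mem_of_memGC_of_iso hC (RelIso.refl _)
      (hFmin _ _ (hH'.join.of_iso_right e) (isEmpty_iso_of_card_lt ?_))
    rw [← Nat.card_congr e.toEquiv, Nat.card_sum, Nat.card_sum]
    omega
  · rintro ⟨W, hW, H, hH, ⟨e⟩⟩
    refine ⟨fun hF => hH.1 (mem_of_memGC_of_iso hC e hF),
      fun β _ F₁ hF₁ hne T hTsep => ?_⟩
    obtain ⟨a, b, -, -, hT⟩ := hTsep
    have hJ := hT.isInducedMinor_join
    refine mem_of_isInducedMinor_join hC hU hH (hJ.trans (hF₁.of_iso_right e)) ?_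
    have h₁ := hJ.card_le
    have h₂ := hF₁.card_lt hne
    rw [Nat.card_congr e.toEquiv, Nat.card_sum] at h₂
    rw [Nat.card_sum] at h₁
    omega

/-- if `C` is hereditary, closed under edge addition, and closed under the
addition of universal vertices, then `ℳ_{𝒢_C} = {2K₁ ∨ H ∣ H ∈ ℳ_C}`. -/
theorem statement_8 (C : GraphClass) (hC : Hereditary C) (hE : EdgeAddClosed C)
    (hU : UnivAddClosed C) (V : Type) [Finite V] (F : SimpleGraph V) :
    MemMC (GCclass C) F ↔
      ∃ (W : Type) (hW : Finite W) (H : SimpleGraph W),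
        @MemMC C W hW H ∧ Nonempty (F ≃g join (⊥ : SimpleGraph (Fin 2)) H) :=
  statement_8_general C hC hU V F

end PaperSep
end

section
/- If a graph H1 is an induced minor of a graph H2, then the complement of H1 is isomorphic to a (not necessarily induced) subgraph of the complement of H2. -/
open SimpleGraph

namespace PaperSep

variable {V : Type} {W : Type}

/-- if `H₁` is an induced minor of `H₂`, then the complement of `H₁` is
isomorphic to a (not necessarily induced) subgraph of the complement of `H₂`. -/
theorem statement_9 (V W : Type) [Finite V] [Finite W]
    (H₁ : SimpleGraph W) (H₂ : SimpleGraph V) (h : IsInducedMinor H₁ H₂) :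
    ∃ f : W ↪ V, ∀ a b : W, H₁ᶜ.Adj a b → H₂ᶜ.Adj (f a) (f b) := by
  obtain ⟨X, hne, hdisj, _, hadj⟩ := h
  have hmem : ∀ w, (hne w).choose ∈ X w := fun w => (hne w).choose_spec
  have hinj : Function.Injective (fun w => (hne w).choose) := by
    intro a b hab
    by_contra hne'
    exact (hdisj a b hne').ne_of_mem (hmem a) (hmem b) hab
  refine ⟨⟨fun w => (hne w).choose, hinj⟩, ?_⟩
  intro a b hab
  obtain ⟨hab1, hab2⟩ := hab
  refine ⟨fun he => hab1 (hinj he), fun hadj2 => ?_⟩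
  have hne' : a ≠ b := hab1
  exact hab2 ((hadj a b hne').mpr ⟨_, hmem a, _, hmem b, hadj2⟩)

end PaperSep
end

section
/- For every integer k ≥ 0: the class C_k of graphs whose vertex set can be partitioned into k cliques is closed under induced minors; the class G_k is closed under induced minors; and every graph in G_k is K_{2,k+1}-induced-minor-free. -/
open SimpleGraph

namespace PaperSep

variable {V : Type} {W : Type}

/-! In an induced minor model `X` of `H` in `G`, distinct branch sets that meet a common clique
of `G` are adjacent in `H`; hence a cover of some vertices of `G` by `k` cliques induces a cover
by `k` cliques of every set of branch sets that it meets. For `𝒞_k` this is applied to the whole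
vertex set. For `𝒢_k`, given a minimal `(a, b)`-separator `S` of `H`, the vertices of `G` that lie
in a branch set of `S` or in no branch set at all separate `X a` from `X b`; a minimal separator
`T` of `G` inside it meets `X w` for every `w ∈ S`, because by minimality of `S` some `a`–`b` path
of `H` meets `S` only in `w`, and its lift to `G` must cross `T`. Finally the `k + 1` side of
`K_{2,k+1}` is an independent minimal separator, which is not a union of `k` cliques. -/

lemma exists_walk_support_subset_of_induce_connected {G : SimpleGraph V} {s : Set V}
    (h : (G.induce s).Connected) {x y : V} (hx : x ∈ s) (hy : y ∈ s) :
    ∃ q : G.Walk x y, ∀ v ∈ q.support, v ∈ s := by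
  obtain ⟨p⟩ := h.preconnected ⟨x, hx⟩ ⟨y, hy⟩
  refine ⟨p.map (Embedding.induce s).toHom, fun v hv => ?_⟩
  replace hv : v ∈ (p.map (Embedding.induce s).toHom).support := hv
  rw [Walk.support_map, List.mem_map] at hv
  obtain ⟨⟨u, hu⟩, -, rfl⟩ := hv
  exact hu

lemma exists_isMinSep_subset [Finite V] {G : SimpleGraph V} {a b : V} {S : Set V}
    (hS : IsSep G a b S) : ∃ T ⊆ S, IsMinSep G a b T := by
  obtain ⟨T, hTS, hT, hTmin⟩ := exists_minimal_le_of_wellFoundedLT (IsSep G a b) S hS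
  exact ⟨T, hTS, hT, fun T' hT'T hT' => hT'T.not_ge (hTmin hT' hT'T.le)⟩

lemma UnionOfCliques.encard_le_of_isIndepSet {G : SimpleGraph V} {k : ℕ} {S : Set V}
    (h : UnionOfCliques G k S) (hS : G.IsIndepSet S) : S.encard ≤ k := by
  obtain ⟨f, hf, rfl⟩ := h
  have hsub : ∀ i, (f i).encard ≤ 1 := fun i =>
    Set.encard_le_one_iff.mpr fun x y hx hy => by
      by_contra hxy
      exact hS (Set.mem_iUnion_of_mem i hx) (Set.mem_iUnion_of_mem i hy) hxy (hf i hx hy hxy)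
  calc (⋃ i, f i).encard ≤ ∑ i, (f i).encard := Set.encard_iUnion_le_of_fintype f
    _ ≤ ∑ _ : Fin k, 1 := Finset.sum_le_sum fun i _ => hsub i
    _ = k := by simp

namespace IsIMModel

variable {G : SimpleGraph V} {H : SimpleGraph W} {X : W → Set V}

lemma eq_of_mem_of_mem (hM : IsIMModel G H X) {v : V} {u w : W} (hu : v ∈ X u)
    (hw : v ∈ X w) : u = w := by
  by_contra h
  exact Set.disjoint_left.mp (hM.2.1 u w h) hu hw

lemma adj_of_adj (hM : IsIMModel G H X) {u w : W} {x y : V} (hx : x ∈ X u) (hy : y ∈ X w)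
    (hxy : G.Adj x y) (huw : u ≠ w) : H.Adj u w :=
  (hM.2.2.2 u w huw).mpr ⟨x, hx, y, hy, hxy⟩

lemma exists_walk_lift (hM : IsIMModel G H X) {a b : W} (p : H.Walk a b) {α β : V}
    (hα : α ∈ X a) (hβ : β ∈ X b) :
    ∃ q : G.Walk α β, ∀ v ∈ q.support, ∃ w ∈ p.support, v ∈ X w := by
  induction p generalizing α with
  | nil =>
    obtain ⟨q, hq⟩ := exists_walk_support_subset_of_induce_connected (hM.2.2.1 _) hα hβ
    exact ⟨q, fun v hv => ⟨_, Walk.start_mem_support _, hq v hv⟩⟩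
  | @cons a c b hac p ih =>
    obtain ⟨x, hx, y, hy, hxy⟩ := (hM.2.2.2 _ _ hac.ne).mp hac
    obtain ⟨q₁, hq₁⟩ := exists_walk_support_subset_of_induce_connected (hM.2.2.1 _) hα hx
    obtain ⟨q₂, hq₂⟩ := ih hy hβ
    refine ⟨q₁.append (.cons hxy q₂), fun v hv => ?_⟩
    simp only [Walk.mem_support_append_iff, Walk.support_cons, List.mem_cons] at hv
    rcases hv with hv | rfl | hv
    · exact ⟨a, Walk.start_mem_support _, hq₁ v hv⟩
    · exact ⟨a, Walk.start_mem_support _, hx⟩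
    · obtain ⟨w, hw, hvw⟩ := hq₂ v hv
      exact ⟨w, List.mem_cons_of_mem _ hw, hvw⟩

lemma exists_walk_proj (hM : IsIMModel G H X) {α β : V} (q : G.Walk α β) {a b : W}
    (hα : α ∈ X a) (hβ : β ∈ X b) (hq : ∀ v ∈ q.support, ∃ w, v ∈ X w) :
    ∃ p : H.Walk a b, ∀ w ∈ p.support, ∃ v ∈ q.support, v ∈ X w := by
  induction q generalizing a with
  | nil =>
    obtain rfl := hM.eq_of_mem_of_mem hα hβ
    exact ⟨.nil, fun w hw => ⟨_, Walk.start_mem_support _, (List.mem_singleton.mp hw) ▸ hα⟩⟩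
  | @cons α γ β hαγ q ih =>
    have hq' : ∀ v ∈ q.support, ∃ w, v ∈ X w := fun v hv => hq v (List.mem_cons_of_mem _ hv)
    obtain ⟨c, hγ⟩ := hq' γ (Walk.start_mem_support _)
    obtain ⟨p, hp⟩ := ih hγ hβ hq'
    have hp' : ∀ w ∈ p.support, ∃ v ∈ (Walk.cons hαγ q).support, v ∈ X w := fun w hw => by
      obtain ⟨v, hv, hvw⟩ := hp w hw
      exact ⟨v, List.mem_cons_of_mem _ hv, hvw⟩
    by_cases hac : a = c
    · subst hac
      exact ⟨p, hp'⟩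
    · refine ⟨.cons (hM.adj_of_adj hα hγ hαγ hac) p, fun w hw => ?_⟩
      rcases List.mem_cons.mp hw with rfl | hw
      · exact ⟨α, Walk.start_mem_support _, hα⟩
      · exact hp' w hw

lemma unionOfCliques_of_inter_nonempty (hM : IsIMModel G H X) {k : ℕ} {U : Set V} {S : Set W}
    (hU : UnionOfCliques G k U) (hS : ∀ w ∈ S, (X w ∩ U).Nonempty) : UnionOfCliques H k S := by
  obtain ⟨f, hf, rfl⟩ := hU
  refine ⟨fun i => {w | w ∈ S ∧ (X w ∩ f i).Nonempty}, ?_, ?_⟩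
  · rintro i u ⟨-, x, hxu, hxf⟩ w ⟨-, y, hyw, hyf⟩ huw
    have hxy : x ≠ y := fun h => huw (hM.eq_of_mem_of_mem hxu (h ▸ hyw))
    exact hM.adj_of_adj hxu hyw (hf i hxf hyf hxy) huw
  · ext w
    simp only [Set.mem_iUnion, Set.mem_ofPred_eq]
    refine ⟨fun hw => ?_, fun ⟨_, hw, _⟩ => hw⟩
    obtain ⟨x, hxw, hxU⟩ := hS w hw
    obtain ⟨i, hi⟩ := Set.mem_iUnion.mp hxU
    exact ⟨i, hw, x, hxw, hi⟩

def separatorPreimage (X : W → Set V) (S : Set W) : Set V :=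
  {v | (∃ w ∈ S, v ∈ X w) ∨ ∀ w, v ∉ X w}

lemma isSep_separatorPreimage (hM : IsIMModel G H X) {a b : W} {S : Set W}
    (hS : IsSep H a b S) {α β : V} (hα : α ∈ X a) (hβ : β ∈ X b) :
    IsSep G α β (separatorPreimage X S) := by
  have hout : ∀ w ∉ S, ∀ v ∈ X w, v ∉ separatorPreimage X S := by
    rintro w hwS v hvw (⟨w', hw'S, hvw'⟩ | hv)
    · exact hwS (hM.eq_of_mem_of_mem hvw' hvw ▸ hw'S)
    · exact hv w hvw
  refine ⟨hout a hS.1 α hα, hout b hS.2.1 β hβ, ?_⟩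
  rintro ⟨q, hq⟩
  obtain ⟨p, hp⟩ := hM.exists_walk_proj q hα hβ fun v hv => by
    by_contra! h
    exact hq v hv (Or.inr h)
  refine hS.2.2 ⟨p, fun w hw hwS => ?_⟩
  obtain ⟨v, hv, hvw⟩ := hp w hw
  exact hq v hv (Or.inl ⟨w, hwS, hvw⟩)

lemma exists_isMinSep_inter_nonempty [Finite V] (hM : IsIMModel G H X) {a b : W} {S : Set W}
    (hS : IsMinSep H a b S) {α β : V} (hα : α ∈ X a) (hβ : β ∈ X b) :
    ∃ T, IsMinSep G α β T ∧ ∀ w ∈ S, (X w ∩ T).Nonempty := by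
  obtain ⟨T, hTS, hT⟩ := exists_isMinSep_subset (hM.isSep_separatorPreimage hS.1 hα hβ)
  refine ⟨T, hT, fun w hwS => ?_⟩
  obtain ⟨p, hp⟩ : ConnAvoid H (S \ {w}) a b := by
    by_contra h
    exact hS.2 _ (Set.sdiff_singleton_ssubset.mpr hwS) ⟨fun ha => hS.1.1 ha.1,
      fun hb => hS.1.2.1 hb.1, h⟩
  obtain ⟨q, hq⟩ := hM.exists_walk_lift p hα hβ
  obtain ⟨v, hvq, hvT⟩ : ∃ v ∈ q.support, v ∈ T := by
    by_contra! h
    exact hT.1.2.2 ⟨q, h⟩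
  obtain ⟨u, hup, hvu⟩ := hq v hvq
  rcases hTS hvT with ⟨u', hu'S, hvu'⟩ | hv
  · obtain rfl := hM.eq_of_mem_of_mem hvu hvu'
    obtain rfl : u = w := by
      by_contra hne
      exact hp u hup ⟨hu'S, hne⟩
    exact ⟨v, hvu, hvT⟩
  · exact absurd hvu (hv u)

lemma memGk [Finite V] (hM : IsIMModel G H X) {k : ℕ} (hG : MemGk k G) : MemGk k H := by
  rintro S ⟨a, b, hab, hnadj, hS⟩
  obtain ⟨α, hα⟩ := hM.1 a
  obtain ⟨β, hβ⟩ := hM.1 b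
  obtain ⟨T, hT, hST⟩ := hM.exists_isMinSep_inter_nonempty hS hα hβ
  have hαβ : α ≠ β := fun h => hab (hM.eq_of_mem_of_mem hα (h ▸ hβ))
  have hnadjG : ¬ G.Adj α β := fun h => hnadj (hM.adj_of_adj hα hβ h hab)
  exact hM.unionOfCliques_of_inter_nonempty (hG T ⟨α, β, hαβ, hnadjG, hT⟩) hST

lemma unionOfCliques_univ (hM : IsIMModel G H X) {k : ℕ} (hG : UnionOfCliques G k Set.univ) :
    UnionOfCliques H k Set.univ :=
  hM.unionOfCliques_of_inter_nonempty hG fun w _ => by simpa using hM.1 w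

end IsIMModel

section completeBipartite

variable {α β : Type}

lemma isIndepSet_range_inr : (completeBipartiteGraph α β).IsIndepSet (Set.range Sum.inr) := by
  rintro _ ⟨i, rfl⟩ _ ⟨j, rfl⟩ _
  simp

lemma isMinSep_range_inr {a a' : α} (ha : a ≠ a') :
    IsMinSep (completeBipartiteGraph α β) (.inl a) (.inl a') (Set.range Sum.inr) := by
  refine ⟨⟨by simp, by simp, ?_⟩, ?_⟩
  · rintro ⟨p, hp⟩
    cases p with
    | nil => exact ha rfl
    | @cons _ c _ hc q =>
      rcases c with c | c
      · simp at hc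
      · exact hp _ (List.mem_cons_of_mem _ q.start_mem_support) ⟨c, rfl⟩
  · rintro T hT ⟨haT, ha'T, hconn⟩
    obtain ⟨_, ⟨j, rfl⟩, hjT⟩ := Set.exists_of_ssubset hT
    have hadj : ∀ i, (completeBipartiteGraph α β).Adj (.inl i) (.inr j) := by simp
    refine hconn ⟨.cons (hadj a) (.cons (hadj a').symm .nil), fun v hv => ?_⟩
    simp only [Walk.support_cons, Walk.support_nil, List.mem_cons, List.not_mem_nil] at hv
    rcases hv with rfl | rfl | rfl | hv
    exacts [haT, hjT, ha'T, hv.elim]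

end completeBipartite

lemma not_memGk_completeBipartiteGraph (k : ℕ) :
    ¬ MemGk k (completeBipartiteGraph (Fin 2) (Fin (k + 1))) := by
  intro hK
  have hS := hK _ ⟨.inl 0, .inl 1, by simp, by simp, isMinSep_range_inr (by simp)⟩
  have hcard := hS.encard_le_of_isIndepSet isIndepSet_range_inr
  have := (Sum.inr_injective (α := Fin 2)).encard_range.trans hcard
  simp only [ENat.card_eq_coe_fintype_card, Fintype.card_fin, Nat.cast_add, Nat.cast_one] at this
  norm_cast at this
  omega

/-- for every `k ≥ 0`, the classes `𝒞_k` and `𝒢_k` are closed under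
induced minors, and every graph in `𝒢_k` is `K_{2,k+1}`-induced-minor-free. -/
theorem statement_11 (k : ℕ) :
    IMClosed (Ckclass k) ∧ IMClosed (Gkclass k) ∧
    (∀ (V : Type) [Finite V] (G : SimpleGraph V), MemGk k G →
      ¬ IsInducedMinor (completeBipartiteGraph (Fin 2) (Fin (k + 1))) G) :=
  ⟨fun _ _ _ _ _ _ hG ⟨_, hM⟩ => hM.unionOfCliques_univ hG,
    fun _ _ _ _ _ _ hG ⟨_, hM⟩ => hM.memGk hG,
    fun _ _ _ hG ⟨_, hM⟩ => not_memGk_completeBipartiteGraph k (hM.memGk hG)⟩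

end PaperSep
end

section
/- Let k ≥ 0 be an integer and let G be a graph. Let G' be the graph obtained from G by adding two new nonadjacent vertices and making each of them adjacent to all vertices of G. Then the chromatic number of the complement of G is at most k if and only if G' belongs to G_k. -/
open SimpleGraph

namespace PaperSep

variable {V : Type} {W : Type}

/-- for a graph `G`, let `G'` be obtained from `G` by adding two new
nonadjacent vertices complete to `G` (i.e. `G' = 2K₁ ∨ G`). Then `χ(Gᶜ) ≤ k` iff
`G' ∈ 𝒢_k`. -/

theorem statement_13 (k : ℕ) (V : Type) [Finite V] (G : SimpleGraph V) :
    Gᶜ.chromaticNumber ≤ (k : ℕ∞) ↔ MemGk k (join (⊥ : SimpleGraph (Fin 2)) G) := by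
  classical
  set G' := join (⊥ : SimpleGraph (Fin 2)) G with hG'
  have hadj_il : ∀ (i : Fin 2) (v : V), G'.Adj (Sum.inl i) (Sum.inr v) := by
    intro i v
    simp [hG', join, SimpleGraph.fromRel_adj]
  have hadj_ll : ∀ (i j : Fin 2), ¬ G'.Adj (Sum.inl i) (Sum.inl j) := by
    intro i j
    simp [hG', join, SimpleGraph.fromRel_adj]
  have hadj_rr : ∀ (u v : V), G'.Adj (Sum.inr u) (Sum.inr v) ↔ G.Adj u v := by
    intro u v
    constructor
    · rintro ⟨hne, h | h⟩
      · exact h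
      · exact h.symm
    · intro h
      exact ⟨by simp [h.ne], Or.inl h⟩
  constructor
  · -- forward direction
    intro hchi
    obtain ⟨c⟩ : Gᶜ.Colorable k := (SimpleGraph.chromaticNumber_le_iff_colorable).mp hchi
    have hadjc : ∀ u v : V, u ≠ v → c u = c v → G.Adj u v := by
      intro u v hne hc
      by_contra h
      exact c.valid ((SimpleGraph.compl_adj _ _ _).mpr ⟨hne, h⟩) hc
    intro S hS
    obtain ⟨a, b, hab, hnadj, ⟨haS, hbS, hsep⟩, -⟩ := hS
    rcases a with i | a' <;> rcases b with j | b'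
    · -- both new vertices : S = inr '' univ
      have hij : i ≠ j := fun h => hab (by rw [h])
      have hSeq : S = Sum.inr '' (Set.univ : Set V) := by
        apply Set.eq_of_subset_of_subset
        · rintro x hx
          rcases x with m | v
          · exfalso
            have hi := i.isLt; have hj := j.isLt; have hm := m.isLt
            have hij' : i.val ≠ j.val := fun h => hij (Fin.ext h)
            have : m.val = i.val ∨ m.val = j.val := by omega
            rcases this with h | h
            · exact haS (by rwa [show Sum.inl m = (Sum.inl i : Fin 2 ⊕ V) from
                congrArg Sum.inl (Fin.ext h)] at hx)
            · exact hbS (by rwa [show Sum.inl m = (Sum.inl j : Fin 2 ⊕ V) from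
                congrArg Sum.inl (Fin.ext h)] at hx)
          · exact ⟨v, trivial, rfl⟩
        · rintro x ⟨v, -, rfl⟩
          by_contra hv
          apply hsep
          refine ⟨Walk.cons (hadj_il i v) (Walk.cons ((hadj_il j v).symm) Walk.nil), ?_⟩
          intro w hw
          simp only [Walk.support_cons, Walk.support_nil, List.mem_cons,
            List.not_mem_nil, or_false] at hw
          rcases hw with rfl | rfl | rfl
          · exact haS
          · exact hv
          · exact hbS
      refine ⟨fun m => Sum.inr '' {v | c v = m}, ?_, ?_⟩
      · intro m
        rintro x ⟨u, hu, rfl⟩ y ⟨v, hv, rfl⟩ hne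
        have huv : u ≠ v := fun h => hne (by rw [h])
        exact (hadj_rr u v).mpr (hadjc u v huv (hu.trans hv.symm))
      · rw [hSeq]
        apply Set.eq_of_subset_of_subset
        · rintro x ⟨v, -, rfl⟩
          exact Set.mem_iUnion.mpr ⟨c v, ⟨v, rfl, rfl⟩⟩
        · intro x hx
          obtain ⟨m, v, -, rfl⟩ := Set.mem_iUnion.mp hx
          exact ⟨v, trivial, rfl⟩
    · exact absurd (hadj_il i b') hnadj
    · exact absurd ((hadj_il j a').symm) hnadj
    · -- both old vertices
      have hab' : a' ≠ b' := fun h => hab (by rw [h])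
      have hnadj' : ¬ G.Adj a' b' := fun h => hnadj ((hadj_rr a' b').mpr h)
      have hcab : c a' ≠ c b' := c.valid ((SimpleGraph.compl_adj _ _ _).mpr ⟨hab', hnadj'⟩)
      have h0S : (Sum.inl 0 : Fin 2 ⊕ V) ∈ S := by
        by_contra h
        apply hsep
        refine ⟨Walk.cons ((hadj_il 0 a').symm) (Walk.cons (hadj_il 0 b') Walk.nil), ?_⟩
        intro w hw
        simp only [Walk.support_cons, Walk.support_nil, List.mem_cons,
          List.not_mem_nil, or_false] at hw
        rcases hw with rfl | rfl | rfl
        · exact haS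
        · exact h
        · exact hbS
      have h1S : (Sum.inl 1 : Fin 2 ⊕ V) ∈ S := by
        by_contra h
        apply hsep
        refine ⟨Walk.cons ((hadj_il 1 a').symm) (Walk.cons (hadj_il 1 b') Walk.nil), ?_⟩
        intro w hw
        simp only [Walk.support_cons, Walk.support_nil, List.mem_cons,
          List.not_mem_nil, or_false] at hw
        rcases hw with rfl | rfl | rfl
        · exact haS
        · exact h
        · exact hbS
      refine ⟨fun m => Sum.inr '' {v | Sum.inr v ∈ S ∧ c v = m}
        ∪ (if m = c a' then {Sum.inl 0} else ∅) ∪ (if m = c b' then {Sum.inl 1} else ∅),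
        ?_, ?_⟩
      · intro m
        intro x hx y hy hne
        have hmem : ∀ z, z ∈ Sum.inr '' {v | Sum.inr v ∈ S ∧ c v = m}
            ∪ (if m = c a' then {Sum.inl 0} else ∅) ∪ (if m = c b' then {Sum.inl 1} else ∅) →
            (∃ v, Sum.inr v = z ∧ c v = m) ∨ (z = (Sum.inl 0 : Fin 2 ⊕ V) ∧ m = c a')
            ∨ (z = (Sum.inl 1 : Fin 2 ⊕ V) ∧ m = c b') := by
          intro z hz
          rcases hz with (⟨v, hv, rfl⟩ | hz) | hz
          · exact Or.inl ⟨v, rfl, hv.2⟩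
          · by_cases hm : m = c a'
            · simp [hm] at hz; exact Or.inr (Or.inl ⟨hz, hm⟩)
            · simp [hm] at hz
          · by_cases hm : m = c b'
            · simp [hm] at hz; exact Or.inr (Or.inr ⟨hz, hm⟩)
            · simp [hm] at hz
        rcases hmem x hx with ⟨u, rfl, hu⟩ | ⟨rfl, hma⟩ | ⟨rfl, hmb⟩ <;>
          rcases hmem y hy with ⟨v, rfl, hv⟩ | ⟨rfl, hma'⟩ | ⟨rfl, hmb'⟩
        · have huv : u ≠ v := fun h => hne (by rw [h])
          exact (hadj_rr u v).mpr (hadjc u v huv (hu.trans hv.symm))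
        · exact (hadj_il 0 u).symm
        · exact (hadj_il 1 u).symm
        · exact hadj_il 0 v
        · exact absurd rfl hne
        · exact absurd (hma ▸ hmb') hcab
        · exact hadj_il 1 v
        · exact absurd (hma' ▸ hmb) hcab
        · exact absurd rfl hne
      · apply Set.eq_of_subset_of_subset
        · intro x hx
          rcases x with m | v
          · have hi := m.isLt
            have : m.val = 0 ∨ m.val = 1 := by omega
            rcases this with h | h
            · have hm0 : m = (0 : Fin 2) := Fin.ext h
              refine Set.mem_iUnion.mpr ⟨c a', ?_⟩
              subst hm0
              exact Or.inl (Or.inr (by simp))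
            · have hm1 : m = (1 : Fin 2) := Fin.ext h
              refine Set.mem_iUnion.mpr ⟨c b', ?_⟩
              subst hm1
              exact Or.inr (by simp)
          · exact Set.mem_iUnion.mpr ⟨c v, Or.inl (Or.inl ⟨v, ⟨hx, rfl⟩, rfl⟩)⟩
        · intro x hx
          obtain ⟨m, hm⟩ := Set.mem_iUnion.mp hx
          rcases hm with (⟨v, hv, rfl⟩ | hz) | hz
          · exact hv.1
          · by_cases h : m = c a'
            · simp [h] at hz; subst hz; exact h0S
            · simp [h] at hz
          · by_cases h : m = c b'
            · simp [h] at hz; subst hz; exact h1S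
            · simp [h] at hz
  · -- backward direction
    intro hmem
    rw [SimpleGraph.chromaticNumber_le_iff_colorable]
    by_cases hV : Nonempty V
    · have hminsep : IsMinimalSeparator G' (Sum.inr '' (Set.univ : Set V)) := by
        refine ⟨Sum.inl 0, Sum.inl 1, by simp [Fin.ext_iff], hadj_ll 0 1, ⟨?_, ?_, ?_⟩, ?_⟩
        · rintro ⟨v, -, h⟩; exact Sum.inl_ne_inr h.symm
        · rintro ⟨v, -, h⟩; exact Sum.inl_ne_inr h.symm
        · rintro ⟨p, hp⟩
          cases p with
          | cons h q =>
            rename_i x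
            rcases x with j | v
            · exact hadj_ll 0 j h
            · exact hp (Sum.inr v) (by simp [Walk.support_cons]) ⟨v, trivial, rfl⟩
        · intro T hT hsepT
          obtain ⟨x, hxS, hxT⟩ := Set.exists_of_ssubset hT
          obtain ⟨v, -, rfl⟩ := hxS
          obtain ⟨ha, hb, hconn⟩ := hsepT
          apply hconn
          refine ⟨Walk.cons (hadj_il 0 v) (Walk.cons ((hadj_il 1 v).symm) Walk.nil), ?_⟩
          intro w hw
          simp only [Walk.support_cons, Walk.support_nil, List.mem_cons,
            List.not_mem_nil, or_false] at hw
          rcases hw with rfl | rfl | rfl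
          · exact ha
          · exact hxT
          · exact hb
      obtain ⟨f, hcl, hun⟩ := hmem _ hminsep
      have hcol : ∀ v : V, ∃ i : Fin k, Sum.inr v ∈ f i := by
        intro v
        have : (Sum.inr v : Fin 2 ⊕ V) ∈ ⋃ i, f i := hun ▸ ⟨v, trivial, rfl⟩
        exact Set.mem_iUnion.mp this
      choose col hcolmem using hcol
      refine ⟨SimpleGraph.Coloring.mk col ?_⟩
      intro u v huv hc
      rw [SimpleGraph.compl_adj _ _ _] at huv
      have hne : (Sum.inr u : Fin 2 ⊕ V) ≠ Sum.inr v := fun h => huv.1 (Sum.inr_injective h)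
      have := hcl (col u) (hcolmem u) (hc ▸ hcolmem v) hne
      exact huv.2 ((hadj_rr u v).mp this)
    · exact ⟨SimpleGraph.Coloring.mk (fun v => absurd ⟨v⟩ hV)
        (fun {u v} _ => absurd ⟨u⟩ hV)⟩

end PaperSep
end
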